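/- arXiv:2001.06552 — 8 statements merged into one kernel-verified Lean document; each statement's English description precedes it below -/
import Mathlib

section
/- Let H be a complex Hilbert space, A : H → H a bounded positive operator with trivial kernel, and V : H → H a linear isometry such that the composition A ∘ V is also a positive operator. Then the orthogonal complement of the range of V intersects the range of A only in {0}. -/
open ContinuousLinearMap

lemma aux_pos_apply_eq_zero {H : Type*} [NormedAddCommGroup H] [InnerProductSpace ℂ H]
    [CompleteSpace H] (T : H →L[ℂ] H) (hT : T.IsPositive) {x : H}
    (hx : (inner ℂ (T x) x : ℂ) = 0) : T x = 0 := by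
  have hsa : ∀ a b : H, (inner ℂ (T a) b : ℂ) = inner ℂ a (T b) := fun a b => by
    have h := hT.isSelfAdjoint
    rw [isSelfAdjoint_iff'] at h
    conv_lhs => rw [← h]
    rw [adjoint_inner_left]
  have key : ∀ y : H, (inner ℂ (T x) y : ℂ) = 0 := by
    intro y
    set z : ℂ := inner ℂ (T x) y with hz
    by_contra hzne
    have hN : 0 < Complex.normSq z := by
      simpa [Complex.normSq_pos] using hzne
    set r : ℝ := Complex.re (inner ℂ (T y) y : ℂ) with hr
    have hr0 : 0 ≤ r := hT.re_inner_nonneg_left y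
    have hyx : (inner ℂ (T y) x : ℂ) = starRingEnd ℂ z := by
      rw [hsa, ← inner_conj_symm, ← hz]
    have hpos : ∀ t : ℝ, 0 ≤ Complex.re (inner ℂ (T (x + (-(t:ℂ) * starRingEnd ℂ z) • y))
        (x + (-(t:ℂ) * starRingEnd ℂ z) • y) : ℂ) := fun t => hT.re_inner_nonneg_left _
    have expand : ∀ t : ℝ, Complex.re (inner ℂ (T (x + (-(t:ℂ) * starRingEnd ℂ z) • y))
        (x + (-(t:ℂ) * starRingEnd ℂ z) • y) : ℂ)
        = -2 * t * Complex.normSq z + t^2 * Complex.normSq z * r := by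
      intro t
      have h1 : T (x + (-(t:ℂ) * starRingEnd ℂ z) • y)
          = T x + (-(t:ℂ) * starRingEnd ℂ z) • T y := by rw [map_add, map_smul]
      rw [h1]
      simp only [inner_add_left, inner_add_right, inner_smul_left, inner_smul_right,
        hx, hyx, ← hz]
      have hzz : z * starRingEnd ℂ z = (Complex.normSq z : ℂ) := by
        rw [mul_comm]; exact Complex.normSq_eq_conj_mul_self.symm
      simp only [map_mul, map_neg, Complex.conj_conj, Complex.conj_ofReal]
      ring_nf
      simp [Complex.ext_iff, Complex.normSq_apply, hr]
      simp only [pow_two, Complex.mul_re, Complex.mul_im, Complex.ofReal_re, Complex.ofReal_im]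
      ring
    have ht := hpos (1 / (r + 1))
    rw [expand] at ht
    have htpos : 0 < 1 / (r + 1) := by positivity
    have : (1 / (r + 1)) * r < 2 := by
      rw [div_mul_eq_mul_div, div_lt_iff₀ (by linarith)]
      linarith
    nlinarith [mul_pos htpos hN]
  have h2 := key (T x)
  rwa [inner_self_eq_zero] at h2

/-- If `A` is a bounded positive operator with trivial kernel on a complex Hilbert space and
`V` is a linear isometry such that `A ∘ V` is positive, then `(range V)ᗮ ∩ range A = {0}`. -/
theorem stmt0 {H : Type*} [NormedAddCommGroup H] [InnerProductSpace ℂ H] [CompleteSpace H]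
    (A V : H →L[ℂ] H) (hA : A.IsPositive) (hAinj : Function.Injective A)
    (hViso : ∀ x, ‖V x‖ = ‖x‖) (hAV : (A ∘L V).IsPositive) :
    (LinearMap.range (V : H →ₗ[ℂ] H))ᗮ ⊓ LinearMap.range (A : H →ₗ[ℂ] H) = ⊥ := by
  rw [eq_bot_iff]
  rintro u ⟨hu1, hu2⟩
  obtain ⟨x, rfl⟩ := hu2
  have hAsa : adjoint A = A := isSelfAdjoint_iff'.mp hA.isSelfAdjoint
  have hAVsa : adjoint (A ∘L V) = A ∘L V := isSelfAdjoint_iff'.mp hAV.isSelfAdjoint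
  have hcomp : A ∘L V = adjoint V ∘L A := by
    conv_lhs => rw [← hAVsa]
    rw [adjoint_comp, hAsa]
  have happ : A (V x) = adjoint V (A x) := by
    have := congrArg (fun f : H →L[ℂ] H => f x) hcomp
    simpa using this
  have hkey : (inner ℂ (A (V x)) (V x) : ℂ) = 0 := by
    rw [happ, adjoint_inner_left]
    have h0 : (inner ℂ (V (V x)) (A x) : ℂ) = 0 :=
      (Submodule.mem_orthogonal _ _).mp hu1 (V (V x)) ⟨V x, rfl⟩
    rw [← inner_conj_symm, h0, map_zero]
  have h1 : A (V x) = 0 := aux_pos_apply_eq_zero A hA hkey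
  have h2 : V x = 0 := hAinj (by simpa using h1)
  have h3 : x = 0 := by
    have := hViso x
    rw [h2, norm_zero] at this
    exact norm_eq_zero.mp this.symm
  simp [h3]
end

section
/- Let A be a bounded positive operator on a complex Hilbert space H with trivial kernel, and let V, W : H → H be linear isometries such that both AV and AW are positive operators. If the ranges of V and W coincide, then V = W. -/
set_option maxHeartbeats 1000000
set_option synthInstance.maxHeartbeats 400000

open ContinuousLinearMap

/-- An isometric continuous linear map satisfies `V† V = 1`. -/
private lemma aux_adj_mul_self {H : Type*} [NormedAddCommGroup H] [InnerProductSpace ℂ H]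
    [CompleteSpace H] (V : H →L[ℂ] H) (hViso : ∀ x, ‖V x‖ = ‖x‖) : adjoint V * V = 1 := by
  have hV : ∀ x y : H, inner ℂ (V x) (V y) = inner ℂ x y := fun x y =>
    (LinearIsometry.mk V.toLinearMap hViso).inner_map_map x y
  ext x
  refine ext_inner_right ℂ fun y => ?_
  simp [mul_apply, adjoint_inner_left, hV]

/-- Two positive operators with the same square are equal. -/
private lemma aux_sq_inj {H : Type*} [NormedAddCommGroup H] [InnerProductSpace ℂ H]
    [CompleteSpace H] (P R : H →L[ℂ] H) (hP : P.IsPositive) (hR : R.IsPositive)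
    (h : P * P = R * R) : P = R := by
  have h1 : CFC.sqrt (P * P) = P := CFC.sqrt_mul_self P ((nonneg_iff_isPositive P).mpr hP)
  have h2 : CFC.sqrt (R * R) = R := CFC.sqrt_mul_self R ((nonneg_iff_isPositive R).mpr hR)
  rw [← h1, ← h2, h]

/-- If `A` is a bounded positive injective operator and `V, W` are linear isometries with
`AV`, `AW` positive and `range V = range W`, then `V = W`. -/
theorem stmt1 {H : Type*} [NormedAddCommGroup H] [InnerProductSpace ℂ H] [CompleteSpace H]
    (A V W : H →L[ℂ] H) (hA : A.IsPositive) (hAinj : Function.Injective A)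
    (hViso : ∀ x, ‖V x‖ = ‖x‖) (hWiso : ∀ x, ‖W x‖ = ‖x‖)
    (hAV : (A ∘L V).IsPositive) (hAW : (A ∘L W).IsPositive)
    (hrange : LinearMap.range (V : H →ₗ[ℂ] H) = LinearMap.range (W : H →ₗ[ℂ] H)) :
    V = W := by
  have hVV : adjoint V * V = 1 := aux_adj_mul_self V hViso
  have hWW : adjoint W * W = 1 := aux_adj_mul_self W hWiso
  -- `W W† V = V` since `range V ⊆ range W`
  have hWWV : W * (adjoint W * V) = V := by
    ext x
    have hx : (V : H →ₗ[ℂ] H) x ∈ LinearMap.range (W : H →ₗ[ℂ] H) :=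
      hrange ▸ LinearMap.mem_range_self (V : H →ₗ[ℂ] H) x
    obtain ⟨y, hy⟩ := hx
    have : adjoint W (W y) = y := by
      have := congrArg (fun T => T y) hWW
      simpa [mul_apply] using this
    simp only [mul_apply, coe_coe] at hy ⊢
    show W (adjoint W (V x)) = V x
    rw [← hy, this]
  -- `V V† W = W` since `range W ⊆ range V`
  have hVVW : V * (adjoint V * W) = W := by
    ext x
    have hx : (W : H →ₗ[ℂ] H) x ∈ LinearMap.range (V : H →ₗ[ℂ] H) :=
      hrange.symm ▸ LinearMap.mem_range_self (W : H →ₗ[ℂ] H) x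
    obtain ⟨y, hy⟩ := hx
    have : adjoint V (V y) = y := by
      have := congrArg (fun T => T y) hVV
      simpa [mul_apply] using this
    simp only [mul_apply, coe_coe] at hy ⊢
    show V (adjoint V (W x)) = W x
    rw [← hy, this]
  set U : H →L[ℂ] H := adjoint W * V with hU
  have hUadj : adjoint U = adjoint V * W := by
    rw [hU, show adjoint W * V = (adjoint W) ∘L V from rfl, adjoint_comp, adjoint_adjoint]
    rfl
  have hUUa : U * adjoint U = 1 := by
    rw [hUadj, hU]
    calc adjoint W * V * (adjoint V * W)
        = adjoint W * (V * (adjoint V * W)) := by noncomm_ring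
      _ = adjoint W * W := by rw [hVVW]
      _ = 1 := hWW
  set P : H →L[ℂ] H := A ∘L V with hPdef
  set Q : H →L[ℂ] H := A ∘L W with hQdef
  have hPmul : P = A * V := rfl
  have hQmul : Q = A * W := rfl
  have hAsa : adjoint A = A := hA.isSelfAdjoint
  have hPsa : adjoint P = P := hAV.isSelfAdjoint
  have hQsa : adjoint Q = Q := hAW.isSelfAdjoint
  -- P = Q U
  have hPQU : P = Q * U := by
    rw [hPmul, hQmul, hU]
    calc A * V = A * (W * (adjoint W * V)) := by rw [hWWV]
      _ = A * W * (adjoint W * V) := by noncomm_ring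
  -- P = U† Q
  have hPUQ : P = adjoint U * Q := by
    conv_lhs => rw [← hPsa, hPQU]
    rw [show Q * U = Q ∘L U from rfl, adjoint_comp, hQsa, hUadj]
    rfl
  -- R := U† Q U is positive and R² = P²
  have hRpos : (adjoint U ∘L Q ∘L U).IsPositive := hAW.adjoint_conj U
  have hRmul : adjoint U ∘L Q ∘L U = adjoint U * Q * U := rfl
  have hsq : P * P = (adjoint U * Q * U) * (adjoint U * Q * U) := by
    calc P * P = (adjoint U * Q) * (Q * U) := by rw [← hPUQ, ← hPQU]
      _ = adjoint U * Q * (U * adjoint U) * Q * U := by rw [hUUa]; noncomm_ring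
      _ = (adjoint U * Q * U) * (adjoint U * Q * U) := by noncomm_ring
  have hPR : P = adjoint U * Q * U := by
    refine aux_sq_inj P _ hAV ?_ hsq
    rw [← hRmul]; exact hRpos
  -- hence U† Q = U† Q U, so Q = Q U = P
  have hQQU : Q = Q * U := by
    have h1 : adjoint U * Q = adjoint U * Q * U := by rw [← hPR, ← hPUQ]
    calc Q = (U * adjoint U) * Q := by rw [hUUa]; noncomm_ring
      _ = U * (adjoint U * Q * U) := by rw [← h1]; noncomm_ring
      _ = (U * adjoint U) * Q * U := by noncomm_ring
      _ = Q * U := by rw [hUUa]; noncomm_ring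
  have hPQ : P = Q := by rw [hPQU, ← hQQU]
  ext x
  apply hAinj
  have := congrArg (fun T => T x) hPQ
  simpa [hPdef, hQdef, comp_apply] using this
end

section
/- Let A be a bounded positive operator on a complex Hilbert space H with trivial kernel and let U be a unitary operator on H such that AU is also positive. Then U is the identity operator. -/
open ContinuousLinearMap

/-!
If `a ≥ 0`, `u` is a coisometry and `a u ≥ 0`, then `a u` is self-adjoint, so
`(a u)² = (a u)(a u)* = a u u* a = a²`; uniqueness of positive square roots gives `a u = a`.
For the operators of the theorem, `U` is unitary and injectivity of `A` then cancels `A`.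
-/

theorem mul_eq_self_of_nonneg_of_mul_star_self_eq_one {A : Type*} [CStarAlgebra A]
    [PartialOrder A] [StarOrderedRing A] {a u : A} (ha : 0 ≤ a) (hu : u * star u = 1)
    (hau : 0 ≤ a * u) : a * u = a := by
  have hsq : (a * u) * (a * u) = a * a :=
    calc (a * u) * (a * u) = (a * u) * star (a * u) := by rw [hau.isSelfAdjoint.star_eq]
      _ = a * (u * star u) * star a := by simp only [star_mul, mul_assoc]
      _ = a * a := by rw [hu, mul_one, ha.isSelfAdjoint.star_eq]
  exact (CFC.mul_self_eq_mul_self_iff _ _ hau ha).mp hsq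

theorem ContinuousLinearMap.mem_unitary_of_norm_map_of_surjective {𝕜 H : Type*} [RCLike 𝕜]
    [NormedAddCommGroup H] [InnerProductSpace 𝕜 H] [CompleteSpace H] {U : H →L[𝕜] H}
    (hiso : ∀ x, ‖U x‖ = ‖x‖) (hsurj : Function.Surjective U) :
    U ∈ unitary (H →L[𝕜] H) :=
  (Unitary.linearIsometryEquiv.symm
    (LinearIsometryEquiv.ofSurjective ⟨(U : H →ₗ[𝕜] H), hiso⟩ hsurj)).property

/-- If `A` is a bounded positive injective operator and `U` is unitary with `AU` positive,
then `U` is the identity. -/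
theorem stmt2 {H : Type*} [NormedAddCommGroup H] [InnerProductSpace ℂ H] [CompleteSpace H]
    (A U : H →L[ℂ] H) (hA : A.IsPositive) (hAinj : Function.Injective A)
    (hUiso : ∀ x, ‖U x‖ = ‖x‖) (hUsurj : Function.Surjective U)
    (hAU : (A ∘L U).IsPositive) :
    U = 1 := by
  have hU : U ∈ unitary (H →L[ℂ] H) := mem_unitary_of_norm_map_of_surjective hUiso hUsurj
  have hAU_eq : A * U = A :=
    mul_eq_self_of_nonneg_of_mul_star_self_eq_one ((nonneg_iff_isPositive _).mpr hA)
      (Unitary.mul_star_self_of_mem hU) ((nonneg_iff_isPositive _).mpr hAU)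
  ext x
  exact hAinj congr($hAU_eq x)
end

section
/- Let A be a bounded positive operator with trivial kernel on a complex Hilbert space H, and let Z be a closed linear subspace of H with Z ∩ range(A) = {0}. Let D be the (unique) bounded positive square root of the operator A(I − P_Z)A, where P_Z is the orthogonal projection onto Z. Then D has trivial kernel (equivalently, dense range). -/
/-!
Since `1 - P_Z = P_{Zᗮ}` is a self-adjoint idempotent and `A` is self-adjoint,
`D² = A (1 - P_Z) A = S† S` with `S = P_{Zᗮ} A`, and `ker (S† S) = ker S`. If `P_{Zᗮ} A x = 0`
then `A x ∈ Z ∩ range A = 0`, so `x = 0`. Hence `D²`, and therefore `D`, is injective.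
-/

open ContinuousLinearMap

section

variable {𝕜 E F : Type*} [RCLike 𝕜] [NormedAddCommGroup E] [InnerProductSpace 𝕜 E]
  [NormedAddCommGroup F] [InnerProductSpace 𝕜 F]

lemma adjoint_starProjection_comp_comp_self [CompleteSpace E] [CompleteSpace F]
    (K : Submodule 𝕜 F) [K.HasOrthogonalProjection] (T : E →L[𝕜] F) :
    adjoint (K.starProjection ∘L T) ∘L (K.starProjection ∘L T) =
      adjoint T ∘L K.starProjection ∘L T := by
  rw [adjoint_comp, (isSelfAdjoint_starProjection K).adjoint_eq, comp_assoc,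
    ← comp_assoc K.starProjection, ← mul_def, K.isIdempotentElem_starProjection.eq]

lemma injective_starProjection_orthogonal_comp {K : Submodule 𝕜 F} [K.HasOrthogonalProjection]
    {T : E →L[𝕜] F} (hT : Function.Injective T) (hK : K ⊓ LinearMap.range (T : E →ₗ[𝕜] F) = ⊥) :
    Function.Injective (Kᗮ.starProjection ∘L T) := by
  refine (injective_iff_map_eq_zero _).2 fun x hx => hT ?_
  have hTx : T x ∈ K ⊓ LinearMap.range (T : E →ₗ[𝕜] F) := by
    refine ⟨?_, x, rfl⟩
    rw [← K.orthogonal_orthogonal, ← Submodule.ker_starProjection]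
    exact hx
  rw [hK] at hTx
  simpa using hTx

lemma IsSelfAdjoint.injective_comp_starProjection_orthogonal_comp [CompleteSpace E]
    {T : E →L[𝕜] E} (hT : IsSelfAdjoint T) (hTinj : Function.Injective T) {K : Submodule 𝕜 E}
    [K.HasOrthogonalProjection] (hK : K ⊓ LinearMap.range (T : E →ₗ[𝕜] E) = ⊥) :
    Function.Injective (T ∘L Kᗮ.starProjection ∘L T) := by
  nth_rw 1 [← hT.adjoint_eq]
  rw [← adjoint_starProjection_comp_comp_self, coe_comp, adjoint_comp_self_injective_iff]
  exact injective_starProjection_orthogonal_comp hTinj hK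

end

theorem stmt3_general {H : Type*} [NormedAddCommGroup H] [InnerProductSpace ℂ H] [CompleteSpace H]
    (A : H →L[ℂ] H) (hA : A.IsPositive) (hAinj : Function.Injective A)
    (Z : Submodule ℂ H) [CompleteSpace Z] (hZA : Z ⊓ LinearMap.range (A : H →ₗ[ℂ] H) = ⊥)
    (D : H →L[ℂ] H)
    (hD2 : D ∘L D = A ∘L ((1 : H →L[ℂ] H) - Z.subtypeL ∘L Z.orthogonalProjectionOnto) ∘L A) :
    Function.Injective D := by
  have hDD := hA.isSelfAdjoint.injective_comp_starProjection_orthogonal_comp hAinj hZA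
  rw [Z.starProjection_orthogonal', Submodule.starProjection, ← hD2, coe_comp] at hDD
  exact hDD.of_comp

/-- Let `A` be bounded positive injective, `Z` a closed subspace with `Z ∩ range A = {0}`,
and `D` the positive square root of `A(I − P_Z)A`. Then `D` is injective. -/
theorem stmt3 {H : Type*} [NormedAddCommGroup H] [InnerProductSpace ℂ H] [CompleteSpace H]
    (A : H →L[ℂ] H) (hA : A.IsPositive) (hAinj : Function.Injective A)
    (Z : Submodule ℂ H) [CompleteSpace Z] (hZA : Z ⊓ LinearMap.range (A : H →ₗ[ℂ] H) = ⊥)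
    (D : H →L[ℂ] H) (hD : D.IsPositive)
    (hD2 : D ∘L D = A ∘L ((1 : H →L[ℂ] H) - Z.subtypeL ∘L Z.orthogonalProjectionOnto) ∘L A) :
    Function.Injective D :=
  stmt3_general A hA hAinj Z hZA D hD2
end

section
/- Let A be a bounded positive operator with trivial kernel on a complex Hilbert space H, and let Z be a closed linear subspace of H with Z ∩ range(A) = {0}. Then there exists a linear isometry V : H → H such that AV is positive and the orthogonal complement of the range of V equals Z. -/
/-!
Let `P` be the orthogonal projection onto `Zᗮ` and `C = P A`. Since `Z ∩ range A = 0`, `C` is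
injective, so its modulus `D = |C| = (A P A)^{1/2}` is an injective positive operator and has
dense range. As `‖D x‖ = ‖C x‖`, the map `D x ↦ C x` extends to an isometry `V` with `V D = C`
(polar decomposition). Then `A V D = A P A = D²`, so `A V = D ≥ 0` on the dense range of `D`,
and the range of `V` has the same closure as the range of `C`, whose orthogonal complement is
`ker (A P) = ker P = Z`.
-/

open ContinuousLinearMap

theorem ContinuousLinearMap.exists_isometry_comp_eq_of_norm_apply_eq {𝕜 E F G : Type*}
    [NontriviallyNormedField 𝕜] [NormedAddCommGroup E] [NormedAddCommGroup F]
    [NormedAddCommGroup G] [NormedSpace 𝕜 E] [NormedSpace 𝕜 F] [NormedSpace 𝕜 G] [CompleteSpace G]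
    (C : E →L[𝕜] G) (D : E →L[𝕜] F) (hD : DenseRange D) (h : ∀ x, ‖C x‖ = ‖D x‖) :
    ∃ U : F →L[𝕜] G, (∀ y, ‖U y‖ = ‖y‖) ∧ U ∘L D = C := by
  have hUD : ∀ x, (C : E →ₗ[𝕜] G).extendOfNorm (D : E →ₗ[𝕜] F) (D x) = C x :=
    LinearMap.extendOfNorm_eq hD ⟨1, fun x ↦ by simpa using (h x).le⟩
  exact ⟨_, fun y ↦ hD.induction_on y (isClosed_eq (by fun_prop) (by fun_prop))
    fun x ↦ by rw [hUD, h], ContinuousLinearMap.ext hUD⟩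

section InnerProductSpace

variable {𝕜 E F G : Type*} [RCLike 𝕜] [NormedAddCommGroup G] [InnerProductSpace 𝕜 G]

theorem ContinuousLinearMap.orthogonal_range_eq_of_comp_eq [NormedAddCommGroup E]
    [NormedSpace 𝕜 E] [NormedAddCommGroup F] [NormedSpace 𝕜 F] {U : F →L[𝕜] G} {D : E →L[𝕜] F}
    {C : E →L[𝕜] G} (hD : DenseRange D) (h : U ∘L D = C) :
    (LinearMap.range (U : F →ₗ[𝕜] G))ᗮ = (LinearMap.range (C : E →ₗ[𝕜] G))ᗮ := by
  subst h
  refine le_antisymm (Submodule.orthogonal_le ?_) ?_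
  · rintro _ ⟨x, rfl⟩
    exact ⟨D x, rfl⟩
  · rw [← Submodule.orthogonal_closure]
    refine Submodule.orthogonal_le ?_
    rintro _ ⟨y, rfl⟩
    exact hD.induction_on y ((Submodule.isClosed_topologicalClosure _).preimage U.continuous)
      fun x ↦ Submodule.le_topologicalClosure _ ⟨x, rfl⟩

theorem Submodule.injective_starProjection_orthogonal_comp [NormedAddCommGroup E]
    [NormedSpace 𝕜 E] {Z : Submodule 𝕜 G} [Z.HasOrthogonalProjection] {A : E →L[𝕜] G}
    (hA : Function.Injective A) (hZA : Z ⊓ LinearMap.range (A : E →ₗ[𝕜] G) = ⊥) :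
    Function.Injective (Zᗮ.starProjection ∘L A) := by
  refine (injective_iff_map_eq_zero _).2 fun x hx ↦ hA ?_
  have hAx : A x ∈ Z := by
    rwa [← Z.orthogonal_orthogonal, ← starProjection_apply_eq_zero_iff]
  simpa [hZA] using Submodule.mem_inf.2 ⟨hAx, LinearMap.mem_range_self _ x⟩

variable [NormedAddCommGroup E] [InnerProductSpace 𝕜 E] [NormedAddCommGroup F]
  [InnerProductSpace 𝕜 F] [CompleteSpace E] [CompleteSpace F]

theorem ContinuousLinearMap.denseRange_of_injective_adjoint {T : E →L[𝕜] F}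
    (hT : Function.Injective (adjoint T)) : DenseRange T := by
  have : (LinearMap.range (T : E →ₗ[𝕜] F)).topologicalClosure = ⊤ := by
    rw [← Submodule.orthogonal_orthogonal_eq_closure, orthogonal_range,
      LinearMap.ker_eq_bot.mpr hT, Submodule.bot_orthogonal_eq_top]
  simpa [DenseRange, LinearMap.coe_range] using
    Submodule.dense_iff_topologicalClosure_eq_top.mpr this

theorem ContinuousLinearMap.norm_apply_eq_of_adjoint_comp_self_eq {S T : E →L[𝕜] F}
    (h : adjoint S ∘L S = adjoint T ∘L T) (x : E) : ‖S x‖ = ‖T x‖ := by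
  rw [apply_norm_eq_sqrt_inner_adjoint_left, apply_norm_eq_sqrt_inner_adjoint_left, h]

theorem Submodule.orthogonal_range_starProjection_orthogonal_comp {Z : Submodule 𝕜 F}
    [Z.HasOrthogonalProjection] {A : E →L[𝕜] F} (hA : Function.Injective (adjoint A)) :
    (LinearMap.range ((Zᗮ.starProjection ∘L A : E →L[𝕜] F) : E →ₗ[𝕜] F))ᗮ = Z := by
  rw [orthogonal_range, adjoint_comp, (isSelfAdjoint_starProjection Zᗮ).adjoint_eq]
  ext x
  rw [LinearMap.mem_ker, coe_coe, comp_apply, map_eq_zero_iff _ hA,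
    starProjection_apply_eq_zero_iff, orthogonal_orthogonal]

end InnerProductSpace

section Hilbert

variable {H : Type*} [NormedAddCommGroup H] [InnerProductSpace ℂ H] [CompleteSpace H]

theorem ContinuousLinearMap.norm_cfcAbs_apply (C : H →L[ℂ] H) (x : H) :
    ‖CFC.abs C x‖ = ‖C x‖ := by
  apply norm_apply_eq_of_adjoint_comp_self_eq
  rw [(CFC.abs_nonneg C).isSelfAdjoint.adjoint_eq]
  exact CFC.abs_mul_abs C

theorem ContinuousLinearMap.denseRange_cfcAbs {C : H →L[ℂ] H} (hC : Function.Injective C) :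
    DenseRange (CFC.abs C : H →L[ℂ] H) := by
  refine denseRange_of_injective_adjoint ?_
  rw [(CFC.abs_nonneg C).isSelfAdjoint.adjoint_eq]
  refine (injective_iff_map_eq_zero (CFC.abs C)).2 fun x hx ↦
    (injective_iff_map_eq_zero C).1 hC x ?_
  rw [← norm_eq_zero, ← norm_cfcAbs_apply, hx, norm_zero]

end Hilbert

/-- Let `A` be bounded positive injective and `Z` a closed subspace with `Z ∩ range A = {0}`.
Then there is a linear isometry `V` with `AV` positive and `(range V)ᗮ = Z`. -/
theorem stmt4 {H : Type*} [NormedAddCommGroup H] [InnerProductSpace ℂ H] [CompleteSpace H]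
    (A : H →L[ℂ] H) (hA : A.IsPositive) (hAinj : Function.Injective A)
    (Z : Submodule ℂ H) (hZclosed : IsClosed (Z : Set H))
    (hZA : Z ⊓ LinearMap.range (A : H →ₗ[ℂ] H) = ⊥) :
    ∃ V : H →L[ℂ] H, (∀ x, ‖V x‖ = ‖x‖) ∧ (A ∘L V).IsPositive ∧
      (LinearMap.range (V : H →ₗ[ℂ] H))ᗮ = Z := by
  have : CompleteSpace Z := hZclosed.completeSpace_coe
  have hAadj : adjoint A = A := hA.isSelfAdjoint.adjoint_eq
  set P := Zᗮ.starProjection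
  set C := P ∘L A
  set D : H →L[ℂ] H := CFC.abs C
  have hDD : D ∘L D = A ∘L C := by
    rw [← mul_def, CFC.abs_mul_abs, star_eq_adjoint, adjoint_comp, hAadj,
      (isSelfAdjoint_starProjection Zᗮ).adjoint_eq]
    change A * P * (P * A) = A * (P * A)
    rw [mul_assoc, ← mul_assoc P, Zᗮ.isIdempotentElem_starProjection.eq]
  have hDdense : DenseRange D :=
    denseRange_cfcAbs (Submodule.injective_starProjection_orthogonal_comp hAinj hZA)
  obtain ⟨V, hV, hVD⟩ :=
    exists_isometry_comp_eq_of_norm_apply_eq C D hDdense fun x ↦ (norm_cfcAbs_apply C x).symm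
  have hAV : A ∘L V = D := by
    refine DFunLike.coe_injective (hDdense.equalizer (map_continuous _) (map_continuous _) ?_)
    exact congrArg DFunLike.coe (by rw [comp_assoc, hVD, hDD] : (A ∘L V) ∘L D = D ∘L D)
  refine ⟨V, hV, hAV ▸ (nonneg_iff_isPositive D).1 (CFC.abs_nonneg C), ?_⟩
  rw [orthogonal_range_eq_of_comp_eq hDdense hVD,
    Submodule.orthogonal_range_starProjection_orthogonal_comp (by rwa [hAadj])]
end

section
/- Let H be a complex Hilbert space, A : H → H a bounded self-adjoint operator with trivial kernel, and U a unitary operator on H such that U(range(A)) ∩ range(A) = {0}. Define B : H → H ⊕ H by Bx = (Ax, UAU⁻¹x). Then the range of B is dense in H ⊕ H, and moreover (H ⊕ {0}) ∩ range(B) = ({0} ⊕ H) ∩ range(B) = {0}. -/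
/-!
Write `B = (A, C)` with `C = U A U⁻¹`. Both `A` and `C` are self-adjoint, so the adjoint of `B`,
viewed as a map into the Hilbert sum `H ⊕ H`, is `(u, v) ↦ A u + C v`. If `A u = -C v`, this
vector lies in `range A ∩ U(range A) = {0}`, so injectivity of `A` and `C` makes `B†` injective,
which is density of the range of `B`. The two intersection statements are injectivity of `A`
and `C`.
-/

open ContinuousLinearMap

section Adjoint

variable {𝕜 E F G : Type*} [RCLike 𝕜]
  [NormedAddCommGroup E] [InnerProductSpace 𝕜 E] [CompleteSpace E]
  [NormedAddCommGroup F] [InnerProductSpace 𝕜 F] [CompleteSpace F]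
  [NormedAddCommGroup G] [InnerProductSpace 𝕜 G] [CompleteSpace G]

theorem ContinuousLinearMap.denseRange_iff_ker_adjoint_eq_bot (T : E →L[𝕜] F) :
    DenseRange T ↔ (adjoint T).ker = ⊥ := by
  rw [← T.orthogonal_range, Submodule.topologicalClosure_eq_top_iff.symm,
    ← Submodule.dense_iff_topologicalClosure_eq_top, DenseRange, LinearMap.coe_range, coe_coe]

theorem denseRange_prodMk_of_adjoint (f : E →L[𝕜] F) (g : E →L[𝕜] G)
    (h : ∀ u v, adjoint f u + adjoint g v = 0 → u = 0 ∧ v = 0) :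
    DenseRange fun x => (f x, g x) := by
  let e := WithLp.prodContinuousLinearEquiv 2 𝕜 F G
  let T : E →L[𝕜] WithLp 2 (F × G) := (e.symm : F × G →L[𝕜] WithLp 2 (F × G)) ∘L f.prod g
  have hT_adjoint (w : WithLp 2 (F × G)) : adjoint T w = adjoint f w.fst + adjoint g w.snd := by
    refine ext_inner_left 𝕜 fun x => ?_
    simp [adjoint_inner_right, inner_add_right, WithLp.prod_inner_apply, T, e]
  have hT : DenseRange T := by
    rw [T.denseRange_iff_ker_adjoint_eq_bot, Submodule.eq_bot_iff]
    intro w hw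
    obtain ⟨hu, hv⟩ := h _ _ ((hT_adjoint w).symm.trans hw)
    exact WithLp.ofLp_injective 2 (Prod.ext hu hv)
  exact e.surjective.denseRange.comp hT e.continuous

theorem IsSelfAdjoint.conj_linearIsometryEquiv {A : E →L[𝕜] E} (hA : IsSelfAdjoint A)
    (U : E ≃ₗᵢ[𝕜] F) :
    IsSelfAdjoint ((U : E →L[𝕜] F) ∘L A ∘L (U.symm : F →L[𝕜] E)) := by
  rw [isSelfAdjoint_iff', adjoint_comp, adjoint_comp, hA.adjoint_eq,
    LinearIsometryEquiv.adjoint_eq_symm, LinearIsometryEquiv.adjoint_eq_symm, U.symm_symm,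
    comp_assoc]

end Adjoint

theorem eq_zero_and_eq_zero_of_add_eq_zero {R M N : Type*} [Ring R] [AddCommGroup M]
    [AddCommGroup N] [Module R M] [Module R N] {f g : M →ₗ[R] N} (hf : Function.Injective f)
    (hg : Function.Injective g) (hfg : Set.range g ∩ Set.range f ⊆ {0}) {u v : M}
    (huv : f u + g v = 0) : u = 0 ∧ v = 0 := by
  have hfu : f u = 0 := hfg ⟨⟨-v, by rw [map_neg, ← eq_neg_iff_add_eq_zero.mpr huv]⟩, u, rfl⟩
  rw [hfu, zero_add] at huv
  exact ⟨(map_eq_zero_iff f hf).1 hfu, (map_eq_zero_iff g hg).1 huv⟩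

/-- Let `A` be bounded self-adjoint with trivial kernel and `U` unitary with
`U(range A) ∩ range A = {0}`. Define `B x = (Ax, U A U⁻¹ x)`. Then `B` has dense range and
`(H ⊕ {0}) ∩ range B = ({0} ⊕ H) ∩ range B = {0}`. -/
theorem stmt8 {H : Type*} [NormedAddCommGroup H] [InnerProductSpace ℂ H] [CompleteSpace H]
    (A : H →L[ℂ] H) (hA : IsSelfAdjoint A) (hAinj : Function.Injective A)
    (U : H ≃ₗᵢ[ℂ] H) (hU : (U '' Set.range A) ∩ Set.range A ⊆ {0}) :
    DenseRange (fun x : H => ((A x, U (A (U.symm x))) : H × H)) ∧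
    (∀ x : H, U (A (U.symm x)) = 0 → A x = 0) ∧
    (∀ x : H, A x = 0 → U (A (U.symm x)) = 0) := by
  set C : H →L[ℂ] H := (U : H →L[ℂ] H) ∘L A ∘L (U.symm : H →L[ℂ] H)
  have hC : IsSelfAdjoint C := hA.conj_linearIsometryEquiv U
  have hCinj : Function.Injective C := U.injective.comp (hAinj.comp U.symm.injective)
  have hCrange : Set.range C = U '' Set.range A := by
    rw [← U.symm.surjective.range_comp A, ← Set.range_comp]
    rfl
  refine ⟨denseRange_prodMk_of_adjoint A C fun u v huv => ?_, fun x hx => ?_, fun x hx => ?_⟩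
  · rw [hA.adjoint_eq, hC.adjoint_eq] at huv
    exact eq_zero_and_eq_zero_of_add_eq_zero (f := (A : H →ₗ[ℂ] H)) (g := C) hAinj hCinj
      (hCrange ▸ hU) huv
  · rw [(map_eq_zero_iff C hCinj).1 hx, map_zero]
  · simp [(map_eq_zero_iff A hAinj).1 hx]
end

section
/- Let K be a positive definite kernel on ℕ with ∑_{n=1}^∞ K(n,n) ≤ 1. Then K ≪ δ_ℕ: for every finitely supported α : ℕ → ℂ, ∑_{n,m} α(n) conj(α(m)) K(n,m) ≤ ∑_n |α(n)|². -/
open scoped ComplexOrder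

/-- A kernel `K : X × X → ℂ` is positive definite if all its finite quadratic forms are
nonnegative (real) numbers; here `0 ≤ ·` is the partial order on `ℂ`. -/
def IsPosDefKernel {X : Type*} (K : X → X → ℂ) : Prop :=
  ∀ (n : ℕ) (x : Fin n → X) (lam : Fin n → ℂ),
    0 ≤ ∑ j, ∑ k, lam j * (starRingEnd ℂ) (lam k) * K (x j) (x k)

private lemma quad_aux (a b c d : ℂ)
    (h : ∀ l1 l2 : ℂ, 0 ≤ (l1 * (starRingEnd ℂ) l1 * a + l1 * (starRingEnd ℂ) l2 * b) +
      (l2 * (starRingEnd ℂ) l1 * c + l2 * (starRingEnd ℂ) l2 * d)) :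
    0 ≤ a ∧ 0 ≤ d ∧ ‖b‖ ^ 2 ≤ a.re * d.re := by
  have ha : 0 ≤ a := by simpa using h 1 0
  have hd : 0 ≤ d := by simpa using h 0 1
  obtain ⟨hare, haim⟩ := Complex.nonneg_iff.mp ha
  obtain ⟨hdre, hdim⟩ := Complex.nonneg_iff.mp hd
  refine ⟨ha, hd, ?_⟩
  -- c = conj b
  have h11 := Complex.nonneg_iff.mp (h 1 1)
  have h1I := Complex.nonneg_iff.mp (h 1 Complex.I)
  have him1 : b.im + c.im = 0 := by
    have := h11.2
    simp [Complex.add_im] at this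
    linarith
  have him2 : -b.re + c.re = 0 := by
    have := h1I.2
    simp [Complex.add_im, Complex.mul_im, Complex.mul_re] at this
    linarith
  have hc : c = (starRingEnd ℂ) b := by
    apply Complex.ext
    · simp only [Complex.conj_re]; linarith
    · simp only [Complex.conj_im]; linarith
  -- key quadratic inequality
  have key : ∀ s : ℝ, 0 ≤ Complex.normSq b * d.re * (s * s) + (2 * Complex.normSq b) * s + a.re := by
    intro s
    have hs := (Complex.le_def.mp (h 1 ((s : ℂ) * b))).1
    rw [hc] at hs
    simp only [Complex.zero_re, map_mul, Complex.conj_ofReal, map_one, one_mul, mul_one,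
      Complex.add_re, Complex.mul_re, Complex.mul_im, Complex.add_im, Complex.ofReal_re,
      Complex.ofReal_im, Complex.one_re, Complex.one_im, Complex.conj_re, Complex.conj_im,
      Complex.normSq_apply] at hs ⊢
    nlinarith [hs]
  have hdisc := discrim_le_zero key
  rw [discrim] at hdisc
  rcases eq_or_ne b 0 with hb | hb
  · simp [hb]
    positivity
  · have hb2 : 0 < Complex.normSq b := Complex.normSq_pos.mpr hb
    have : Complex.normSq b ≤ a.re * d.re := by nlinarith [hdisc]
    calc ‖b‖ ^ 2 = Complex.normSq b := Complex.sq_norm b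
      _ ≤ a.re * d.re := this

/-- If `K` is a positive definite kernel on `ℕ` with `∑_n K(n,n) ≤ 1`, then `K ≪ δ`:
for every finitely supported `α`, `∑_{n,m} α(n) conj(α(m)) K(n,m) ≤ ∑_n |α(n)|²`. -/
theorem stmt13 (K : ℕ → ℕ → ℂ) (hK : IsPosDefKernel K)
    (hsum : Summable fun n => (K n n).re)
    (hle : ∑' n : ℕ, (K n n).re ≤ 1) :
    ∀ α : ℕ →₀ ℂ,
      ∑ n ∈ α.support, ∑ m ∈ α.support, α n * (starRingEnd ℂ) (α m) * K n m ≤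
        ∑ n ∈ α.support, ((‖α n‖ ^ 2 : ℝ) : ℂ) := by
  have h2 : ∀ n m : ℕ, 0 ≤ K n n ∧ 0 ≤ K m m ∧
      ‖K n m‖ ^ 2 ≤ (K n n).re * (K m m).re := by
    intro n m
    apply quad_aux
    intro l1 l2
    have := hK 2 ![n, m] ![l1, l2]
    simpa [Fin.sum_univ_two] using this
  have hdiag : ∀ n, 0 ≤ (K n n).re := fun n => (Complex.nonneg_iff.mp (h2 n n).1).1
  have hcs : ∀ n m, ‖K n m‖ ≤ Real.sqrt (K n n).re * Real.sqrt (K m m).re := by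
    intro n m
    have h := (h2 n m).2.2
    calc ‖K n m‖ = Real.sqrt (‖K n m‖ ^ 2) := by
          rw [Real.sqrt_sq (norm_nonneg _)]
      _ ≤ Real.sqrt ((K n n).re * (K m m).re) := Real.sqrt_le_sqrt h
      _ = Real.sqrt (K n n).re * Real.sqrt (K m m).re := Real.sqrt_mul (hdiag n) _
  intro α
  set s := α.support with hs
  set Q : ℂ := ∑ n ∈ s, ∑ m ∈ s, α n * (starRingEnd ℂ) (α m) * K n m with hQ
  -- Q is nonnegative
  have hred : ∀ F : ℕ → ℂ, ∑ j : Fin s.card, F ((s.equivFin.symm j : ℕ)) = ∑ a ∈ s, F a := by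
    intro F
    rw [Equiv.sum_comp s.equivFin.symm (fun a : {x // x ∈ s} => F a), Finset.sum_coe_sort]
  have hQpos : 0 ≤ Q := by
    have h := hK s.card (fun j => (s.equivFin.symm j : ℕ)) (fun j => α (s.equivFin.symm j : ℕ))
    have heq : (∑ j : Fin s.card, ∑ k : Fin s.card,
        α (s.equivFin.symm j : ℕ) * (starRingEnd ℂ) (α (s.equivFin.symm k : ℕ)) *
          K (s.equivFin.symm j : ℕ) (s.equivFin.symm k : ℕ)) =
        ∑ n ∈ s, ∑ m ∈ s, α n * (starRingEnd ℂ) (α m) * K n m := by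
      calc (∑ j : Fin s.card, ∑ k : Fin s.card,
            α (s.equivFin.symm j : ℕ) * (starRingEnd ℂ) (α (s.equivFin.symm k : ℕ)) *
              K (s.equivFin.symm j : ℕ) (s.equivFin.symm k : ℕ))
          = ∑ j : Fin s.card, ∑ m ∈ s,
              α (s.equivFin.symm j : ℕ) * (starRingEnd ℂ) (α m) * K (s.equivFin.symm j : ℕ) m :=
            Finset.sum_congr rfl fun j _ => hred
              (fun m => α (s.equivFin.symm j : ℕ) * (starRingEnd ℂ) (α m) *
                K (s.equivFin.symm j : ℕ) m)
        _ = ∑ n ∈ s, ∑ m ∈ s, α n * (starRingEnd ℂ) (α m) * K n m :=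
            hred (fun a => ∑ m ∈ s, α a * (starRingEnd ℂ) (α m) * K a m)
    rw [hQ, ← heq]
    exact h
  -- split into real and imaginary parts
  rw [Complex.le_def]
  constructor
  · -- real part
    have hQre : Q.re ≤ ‖Q‖ := Complex.re_le_norm Q
    have hQabs : ‖Q‖ ≤ ∑ n ∈ s, ∑ m ∈ s,
        ‖α n‖ * ‖α m‖ * ‖K n m‖ := by
      refine (norm_sum_le _ _).trans ?_
      refine Finset.sum_le_sum fun n _ => ?_
      refine (norm_sum_le _ _).trans ?_
      refine Finset.sum_le_sum fun m _ => ?_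
      simp [map_mul]
    have hstep : ∑ n ∈ s, ∑ m ∈ s,
        ‖α n‖ * ‖α m‖ * ‖K n m‖ ≤
        (∑ n ∈ s, ‖α n‖ * Real.sqrt (K n n).re) ^ 2 := by
      have : ∀ n ∈ s, ∀ m ∈ s,
          ‖α n‖ * ‖α m‖ * ‖K n m‖ ≤
          (‖α n‖ * Real.sqrt (K n n).re) *
            (‖α m‖ * Real.sqrt (K m m).re) := by
        intro n _ m _
        have := hcs n m
        have hn := norm_nonneg (α n)
        have hm := norm_nonneg (α m)
        calc ‖α n‖ * ‖α m‖ * ‖K n m‖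
            ≤ ‖α n‖ * ‖α m‖ *
              (Real.sqrt (K n n).re * Real.sqrt (K m m).re) := by
              apply mul_le_mul_of_nonneg_left this (by positivity)
          _ = (‖α n‖ * Real.sqrt (K n n).re) *
              (‖α m‖ * Real.sqrt (K m m).re) := by ring
      calc ∑ n ∈ s, ∑ m ∈ s, ‖α n‖ * ‖α m‖ * ‖K n m‖
          ≤ ∑ n ∈ s, ∑ m ∈ s, (‖α n‖ * Real.sqrt (K n n).re) *
              (‖α m‖ * Real.sqrt (K m m).re) :=
            Finset.sum_le_sum fun n hn => Finset.sum_le_sum fun m hm => this n hn m hm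
        _ = (∑ n ∈ s, ‖α n‖ * Real.sqrt (K n n).re) ^ 2 := by
            rw [sq, Finset.sum_mul_sum]
    have hCS : (∑ n ∈ s, ‖α n‖ * Real.sqrt (K n n).re) ^ 2 ≤
        (∑ n ∈ s, ‖α n‖ ^ 2) * (∑ n ∈ s, (K n n).re) := by
      have := Finset.sum_mul_sq_le_sq_mul_sq s (fun n => ‖α n‖)
        (fun n => Real.sqrt (K n n).re)
      have hsq : ∀ n ∈ s, Real.sqrt (K n n).re ^ 2 = (K n n).re := fun n _ =>
        Real.sq_sqrt (hdiag n)
      calc (∑ n ∈ s, ‖α n‖ * Real.sqrt (K n n).re) ^ 2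
          ≤ (∑ n ∈ s, ‖α n‖ ^ 2) * (∑ n ∈ s, Real.sqrt (K n n).re ^ 2) := this
        _ = (∑ n ∈ s, ‖α n‖ ^ 2) * (∑ n ∈ s, (K n n).re) := by
            rw [Finset.sum_congr rfl hsq]
    have htsum : ∑ n ∈ s, (K n n).re ≤ 1 :=
      le_trans (Summable.sum_le_tsum s (fun n _ => hdiag n) hsum) hle
    have hsum2 : 0 ≤ ∑ n ∈ s, ‖α n‖ ^ 2 :=
      Finset.sum_nonneg fun n _ => by positivity
    have hfinal : Q.re ≤ ∑ n ∈ s, ‖α n‖ ^ 2 := by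
      calc Q.re ≤ ‖Q‖ := hQre
        _ ≤ _ := hQabs
        _ ≤ _ := hstep
        _ ≤ (∑ n ∈ s, ‖α n‖ ^ 2) * (∑ n ∈ s, (K n n).re) := hCS
        _ ≤ (∑ n ∈ s, ‖α n‖ ^ 2) * 1 := by
            exact mul_le_mul_of_nonneg_left htsum hsum2
        _ = ∑ n ∈ s, ‖α n‖ ^ 2 := mul_one _
    simpa [Complex.re_sum, ← Complex.ofReal_pow, Complex.ofReal_re] using hfinal
  · -- imaginary part
    have := (Complex.nonneg_iff.mp hQpos).2
    rw [← this]
    simp [Complex.im_sum, ← Complex.ofReal_pow, Complex.ofReal_im]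
end

section
/- For n ≥ 1 let H_n = ∑_{k=1}^n 1/k be the n-th harmonic number and set a_k = √(1/H_k − 1/H_{k+1}) = 1/√((k+1) H_k H_{k+1}) for k ≥ 1. Then: (1) the sequence (a_k) is monotone decreasing; (2) ∑_{k=1}^∞ a_k² = 1; and (3) for every n ≥ 1, ∑_{k=1}^∞ a_k a_{k+n−1} ≥ 1/H_n. -/
/-!
Since `H_{k+1} = H_k + 1/(k+1)`, we have `1/H_k - 1/H_{k+1} = 1/((k+1) H_k H_{k+1})`, whose
denominator increases with `k`; hence `(a_k)` is decreasing. The squares `a_k² = 1/H_k - 1/H_{k+1}`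
telescope and `H_k → ∞`, so `∑_{k ≥ m} a_k² = 1/H_m`. For (3), monotonicity gives
`a_k a_{k+n-1} ≥ a_{k+n-1}²`, and the right-hand side sums to `1/H_n`.
-/

open Filter Topology

noncomputable def harmonicNum (n : ℕ) : ℝ := ∑ k ∈ Finset.range n, (1 : ℝ) / (k + 1)

noncomputable def seqA (k : ℕ) : ℝ :=
  Real.sqrt (1 / harmonicNum (k + 1) - 1 / harmonicNum (k + 2))

theorem hasSum_sub_succ_of_antitone {g : ℕ → ℝ} {l : ℝ} (hg : Antitone g)
    (hl : Tendsto g atTop (𝓝 l)) : HasSum (fun n => g n - g (n + 1)) (g 0 - l) := by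
  rw [hasSum_iff_tendsto_nat_of_nonneg fun n => sub_nonneg.2 (hg n.le_succ)]
  simp only [Finset.sum_range_sub']
  exact hl.const_sub (g 0)

theorem tsum_sq_add_le_tsum_mul_add {a : ℕ → ℝ} (ha : Antitone a) (ha0 : ∀ k, 0 ≤ a k)
    (hsq : Summable fun k => a k ^ 2) (n : ℕ) :
    ∑' k, a (k + n) ^ 2 ≤ ∑' k, a k * a (k + n) := by
  have hle : ∀ k, a (k + n) ≤ a k := fun k => ha (Nat.le_add_right k n)
  have hmul : Summable fun k => a k * a (k + n) :=
    hsq.of_nonneg_of_le (fun k => mul_nonneg (ha0 k) (ha0 _))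
      (fun k => by rw [sq]; exact mul_le_mul_of_nonneg_left (hle k) (ha0 k))
  refine Summable.tsum_le_tsum (fun k => ?_) ((summable_nat_add_iff n).2 hsq) hmul
  rw [sq]
  exact mul_le_mul_of_nonneg_right (hle k) (ha0 _)

theorem harmonicNum_succ (n : ℕ) : harmonicNum (n + 1) = harmonicNum n + 1 / (n + 1) :=
  Finset.sum_range_succ _ n

theorem harmonicNum_pos (n : ℕ) : 0 < harmonicNum (n + 1) :=
  Finset.sum_pos (fun i _ => by positivity) ⟨0, Finset.mem_range.2 n.succ_pos⟩

theorem harmonicNum_monotone : Monotone harmonicNum :=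
  monotone_nat_of_le_succ fun n => by
    rw [harmonicNum_succ]
    exact le_add_of_nonneg_right (by positivity)

theorem tendsto_harmonicNum_atTop : Tendsto harmonicNum atTop atTop :=
  Real.tendsto_sum_range_one_div_nat_succ_atTop

theorem one_div_harmonicNum_sub_one_div_harmonicNum_succ (k : ℕ) :
    1 / harmonicNum (k + 1) - 1 / harmonicNum (k + 2) =
      1 / ((k + 2) * harmonicNum (k + 1) * harmonicNum (k + 2)) := by
  have := harmonicNum_pos k
  rw [harmonicNum_succ (k + 1)]
  push_cast
  field_simp
  ring

theorem seqA_eq (k : ℕ) :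
    seqA k = 1 / Real.sqrt ((k + 2) * harmonicNum (k + 1) * harmonicNum (k + 2)) := by
  rw [seqA, one_div_harmonicNum_sub_one_div_harmonicNum_succ, one_div, Real.sqrt_inv, one_div]

theorem seqA_nonneg (k : ℕ) : 0 ≤ seqA k := Real.sqrt_nonneg _

theorem seqA_antitone : Antitone seqA := by
  intro a b h
  have := harmonicNum_pos a
  have := harmonicNum_pos (a + 1)
  have := harmonicNum_pos b
  rw [seqA_eq, seqA_eq]
  gcongr <;> exact harmonicNum_monotone (by omega)

theorem seqA_sq (k : ℕ) : seqA k ^ 2 = 1 / harmonicNum (k + 1) - 1 / harmonicNum (k + 2) := by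
  rw [seqA, Real.sq_sqrt]
  rw [one_div_harmonicNum_sub_one_div_harmonicNum_succ]
  have := harmonicNum_pos k
  have := harmonicNum_pos (k + 1)
  positivity

theorem hasSum_seqA_sq_add (m : ℕ) :
    HasSum (fun k => seqA (k + m) ^ 2) (1 / harmonicNum (m + 1)) := by
  have hg : Antitone fun n : ℕ => 1 / harmonicNum (n + m + 1) := fun a b h =>
    one_div_le_one_div_of_le (harmonicNum_pos _) (harmonicNum_monotone (by omega))
  have hl : Tendsto (fun n : ℕ => 1 / harmonicNum (n + m + 1)) atTop (𝓝 0) := by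
    simp only [one_div]
    exact (tendsto_harmonicNum_atTop.comp (tendsto_add_atTop_nat (m + 1))).inv_tendsto_atTop
  convert hasSum_sub_succ_of_antitone hg hl using 1
  · ext k
    rw [seqA_sq]
    congr 3; omega
  · simp

/-- With `a_k = √(1/H_k − 1/H_{k+1}) = 1/√((k+1)H_k H_{k+1})`: `(a_k)` is monotone
decreasing, `∑ a_k² = 1`, and `∑_k a_k a_{k+n−1} ≥ 1/H_n` for every `n ≥ 1`. -/
theorem stmt18 :
    (∀ k : ℕ, seqA k =
      1 / Real.sqrt ((k + 2) * harmonicNum (k + 1) * harmonicNum (k + 2))) ∧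
    (∀ k : ℕ, seqA (k + 1) ≤ seqA k) ∧
    HasSum (fun k => seqA k ^ 2) 1 ∧
    ∀ n : ℕ, 1 / harmonicNum (n + 1) ≤ ∑' k, seqA k * seqA (k + n) := by
  have hsq : HasSum (fun k => seqA k ^ 2) 1 := by
    simpa [harmonicNum] using hasSum_seqA_sq_add 0
  refine ⟨seqA_eq, fun k => seqA_antitone k.le_succ, hsq, fun n => ?_⟩
  rw [← (hasSum_seqA_sq_add n).tsum_eq]
  exact tsum_sq_add_le_tsum_mul_add seqA_antitone seqA_nonneg hsq.summable n
end
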